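/- arXiv:2508.15177 — 2 statements merged into one kernel-verified Lean document; each statement's English description precedes it below -/
import Mathlib

section
/- The graph B_5 is not word-representable. -/
/-- Two distinct letters `x` and `y` alternate in the word `w` if the subsequence of `w`
formed by all occurrences of `x` and `y` has no two equal consecutive letters. -/
def Alternates {V : Type*} [DecidableEq V] (w : List V) (x y : V) : Prop :=
  (w.filter (fun z => decide (z = x ∨ z = y))).Chain' (· ≠ ·)

/-- A graph `G` is word-representable if there is a word over its vertex set, in which
every vertex occurs, such that two distinct vertices alternate in the word iff
they are adjacent in `G`. -/
def WordRepresentable {V : Type*} [DecidableEq V] (G : SimpleGraph V) : Prop :=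
  ∃ w : List V, (∀ v : V, v ∈ w) ∧
    ∀ x y : V, x ≠ y → (Alternates w x y ↔ G.Adj x y)

/-- The graph `B₅` on vertices `{1,…,8}` (vertex `i` of the paper is `i - 1` here):
a clique on `{1,2,3,4}` together with the edges
`{1,5},{1,6},{1,7},{1,8},{2,5},{2,7},{2,8},{3,7},{4,8},{5,6},{5,7},{5,8},{6,7},{6,8},{7,8}`. -/
def B5 : SimpleGraph (Fin 8) :=
  SimpleGraph.fromRel (fun a b => (a, b) ∈
    ([(0,1),(0,2),(0,3),(1,2),(1,3),(2,3),
      (0,4),(0,5),(0,6),(0,7),(1,4),(1,6),(1,7),(2,6),(3,7),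
      (4,5),(4,6),(4,7),(5,6),(5,7),(6,7)] : List (Fin 8 × Fin 8)))

set_option linter.unusedSectionVars false
namespace NWR
open List

variable {V : Type*} [DecidableEq V]

/-- alternating word of length `n` starting with `x` -/
def altL (x y : V) : ℕ → List V
  | 0 => []
  | n+1 => x :: altL y x n

lemma altL_head {x y : V} {n : ℕ} (hn : n ≠ 0) : (altL x y n).head? = some x := by
  cases n with
  | zero => exact absurd rfl hn
  | succ n => rfl

lemma altL_chain' {x y : V} (h : x ≠ y) : ∀ n, List.Chain' (· ≠ ·) (altL x y n) := by
  intro n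
  induction n generalizing x y with
  | zero => simp [altL, Chain']
  | succ n ih =>
    rw [altL, Chain', isChain_cons]
    refine ⟨?_, ih h.symm⟩
    intro b hb
    cases n with
    | zero => simp [altL] at hb
    | succ n => rw [altL_head (Nat.succ_ne_zero n)] at hb; cases hb; exact h

lemma count_altL {x y : V} (h : x ≠ y) :
    ∀ n, count x (altL x y n) = (n+1)/2 ∧ count y (altL x y n) = n/2 := by
  intro n
  induction n generalizing x y with
  | zero => simp [altL]
  | succ n ih =>
    obtain ⟨h1, h2⟩ := ih h.symm
    constructor
    · rw [altL, count_cons_self, h2]; omega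
    · rw [altL, count_cons_of_ne h, h1]

lemma nf_head {x y : V} (hxy : x ≠ y) :
    ∀ (m : List V), (∀ z ∈ m, z = x ∨ z = y) → m.Chain' (· ≠ ·) →
      m.head? = some x → m = altL x y m.length := by
  intro m
  induction m generalizing x y with
  | nil => intro _ _ h; cases h
  | cons a m ih =>
    intro hmem hch hh
    have ha : a = x := by simpa using hh
    subst ha
    rw [length_cons, altL]
    congr 1
    cases m with
    | nil => rfl
    | cons b m' =>
      have hb : b = y := by
        rcases hmem b (by simp) with h | h
        · exfalso
          have := (isChain_cons.1 hch).1 b rfl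
          exact this h.symm
        · exact h
      subst hb
      exact ih hxy.symm (fun z hz => (hmem z (mem_cons_of_mem _ hz)).symm) hch.tail rfl

lemma nf {x y : V} (hxy : x ≠ y) (m : List V) (hmem : ∀ z ∈ m, z = x ∨ z = y)
    (hch : m.Chain' (· ≠ ·)) :
    m = altL x y m.length ∨ m = altL y x m.length := by
  cases m with
  | nil => left; rfl
  | cons a m =>
    rcases hmem a (by simp) with ha | ha
    · left; exact nf_head hxy _ hmem hch (by simp [ha])
    · right
      exact nf_head hxy.symm _ (fun z hz => (hmem z hz).symm) hch (by simp [ha])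

lemma prefix_count_altL {x y : V} (hxy : x ≠ y) :
    ∀ (n : ℕ) (p : List V), p <+: altL x y n →
      count y p ≤ count x p ∧ count x p ≤ count y p + 1 := by
  intro n
  induction n generalizing x y with
  | zero =>
    intro p hp
    rw [altL, prefix_nil] at hp
    simp [hp]
  | succ n ih =>
    intro p hp
    rw [altL] at hp
    cases p with
    | nil => simp
    | cons b p' =>
      rw [cons_prefix_iff] at hp
      obtain ⟨_, hh, hp'⟩ := hp
      obtain ⟨rfl, rfl⟩ := List.cons.inj hh
      obtain ⟨h1, h2⟩ := ih hxy.symm p' hp'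
      rw [count_cons_self, count_cons_of_ne hxy]
      omega

lemma chain'_of_prefix_count {x y : V} (hxy : x ≠ y) :
    ∀ (m : List V), (∀ z ∈ m, z = x ∨ z = y) →
      (∀ p, p <+: m → count y p ≤ count x p ∧ count x p ≤ count y p + 1) →
      m.Chain' (· ≠ ·)
  | [] => fun _ _ => isChain_nil
  | [a] => fun _ _ => isChain_singleton a
  | a :: b :: m'' => fun hmem hp => by
    have ha : a = x := by
      rcases hmem a (by simp) with h | h
      · exact h
      · exfalso
        have := hp [a] ⟨b :: m'', rfl⟩
        rw [h] at this
        rw [count_singleton, count_cons_of_ne hxy.symm] at this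
        simp at this
    have hb : b = y := by
      rw [ha] at hmem hp
      rcases hmem b (by simp) with h | h
      · exfalso
        have := hp [x, b] ⟨m'', rfl⟩
        rw [h] at this
        rw [count_cons_self, count_cons_self, count_cons_of_ne hxy,
          count_cons_of_ne hxy] at this
        simp at this
      · exact h
    rw [ha, hb] at hmem hp ⊢
    rw [Chain', isChain_cons_cons]
    refine ⟨hxy, ?_⟩
    have htail : (y :: m'').Chain' (· ≠ ·) := by
      rw [Chain', isChain_cons]
      constructor
      · intro c hc
        cases m'' with
        | nil => cases hc
        | cons c' m3 =>
          have hc' : c' = c := by simpa using hc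
          rw [← hc']
          rcases hmem c' (by simp) with h | h
          · rw [h]; exact hxy.symm
          · exfalso
            have := hp [x, y, c'] ⟨m3, by simp⟩
            rw [h] at this
            rw [count_cons_self, count_cons_of_ne hxy, count_cons_self,
              count_cons_of_ne hxy.symm, count_cons_of_ne hxy.symm, count_cons_self] at this
            simp at this
      · exact chain'_of_prefix_count hxy m''
          (fun z hz => hmem z (by simp [hz]))
          (fun p hpp => by
            have := hp (x :: y :: p) (by
              obtain ⟨t, ht⟩ := hpp
              exact ⟨t, by simp [ht]⟩)
            rw [count_cons_self, count_cons_of_ne hxy, count_cons_of_ne hxy.symm,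
              count_cons_self] at this
            omega)
    exact htail

lemma exists_take_of_prefix_filter (q : V → Bool) :
    ∀ (l : List V) (p : List V), p <+: l.filter q → ∃ n, p = (l.take n).filter q := by
  intro l
  induction l with
  | nil =>
    intro p hp
    rw [filter_nil, prefix_nil] at hp
    exact ⟨0, by simp [hp]⟩
  | cons a l ih =>
    intro p hp
    by_cases hqa : q a
    · rw [filter_cons_of_pos hqa] at hp
      cases p with
      | nil => exact ⟨0, rfl⟩
      | cons b p' =>
        rw [cons_prefix_cons] at hp
        obtain ⟨rfl, hp'⟩ := hp
        obtain ⟨n, hn⟩ := ih p' hp'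
        exact ⟨n + 1, by rw [take_succ_cons, filter_cons_of_pos hqa, hn]⟩
    · rw [filter_cons_of_neg hqa] at hp
      obtain ⟨n, hn⟩ := ih p hp
      exact ⟨n + 1, by rw [take_succ_cons, filter_cons_of_neg hqa, hn]⟩

lemma head?_filter (q : V → Bool) : ∀ (l : List V), (l.filter q).head? = l.find? q := by
  intro l
  induction l with
  | nil => rfl
  | cons a l ih =>
    by_cases hqa : q a
    · rw [filter_cons_of_pos hqa, find?_cons_of_pos hqa]; rfl
    · rw [filter_cons_of_neg hqa, find?_cons_of_neg hqa]; exact ih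

lemma length_eq_counts {x y : V} (hxy : x ≠ y) :
    ∀ (l : List V), (∀ z ∈ l, z = x ∨ z = y) → l.length = count x l + count y l := by
  intro l
  induction l with
  | nil => simp
  | cons a l ih =>
    intro hmem
    have := ih (fun z hz => hmem z (by simp [hz]))
    rcases hmem a (by simp) with rfl | rfl
    · rw [length_cons, count_cons_self, count_cons_of_ne hxy]; omega
    · rw [length_cons, count_cons_self, count_cons_of_ne hxy.symm]; omega

/-! ### prefix counting machinery -/

def cnt (w : List V) (t : V) (n : ℕ) : ℕ := (w.take n).count t

/-- `x` "leads" `y`: at every prefix, the count of `x` is equal to or one more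
than the count of `y`. -/
def Leads (w : List V) (x y : V) : Prop :=
  ∀ n, cnt w y n ≤ cnt w x n ∧ cnt w x n ≤ cnt w y n + 1

lemma cnt_zero (w : List V) (t : V) : cnt w t 0 = 0 := by simp [cnt]

lemma cnt_succ (w : List V) (t : V) (n : ℕ) :
    cnt w t (n+1) = cnt w t n + if w[n]? = some t then 1 else 0 := by
  rw [cnt, cnt, take_succ, count_append]
  congr 1
  cases h : w[n]? with
  | none => simp
  | some a =>
    by_cases hat : a = t
    · subst hat; simp [Option.toList]
    · simp [Option.toList, count_singleton', hat]

lemma cnt_mono (w : List V) (t : V) {m n : ℕ} (h : m ≤ n) : cnt w t m ≤ cnt w t n := by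
  have he : w.take m = (w.take n).take m := by
    rw [take_take]; congr 1; omega
  rw [cnt, he]
  exact ((take_prefix m (w.take n)).sublist).count_le t

lemma cnt_length (w : List V) (t : V) : cnt w t w.length = w.count t := by
  rw [cnt, take_length]

lemma getElem?_of_cnt_lt {w : List V} {t : V} {n : ℕ} (h : cnt w t n < cnt w t (n+1)) :
    w[n]? = some t := by
  rw [cnt_succ] at h
  by_cases hg : w[n]? = some t
  · exact hg
  · rw [if_neg hg] at h; omega

/-- if two distinct letters have identical prefix counts everywhere, and one of them
occurs, contradiction. -/
lemma false_of_cnt_eq {w : List V} {x y : V} (hxy : x ≠ y) (hx : x ∈ w)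
    (h : ∀ n, cnt w x n = cnt w y n) : False := by
  have hzero : ∀ n, cnt w x n = 0 := by
    intro n
    induction n with
    | zero => exact cnt_zero w x
    | succ n ih =>
      by_contra hne
      have h1 : cnt w x n < cnt w x (n+1) := by
        have := cnt_mono w x (Nat.le_succ n)
        omega
      have h2 : cnt w y n < cnt w y (n+1) := by
        rw [← h n, ← h (n+1)]; exact h1
      have := getElem?_of_cnt_lt h1
      rw [getElem?_of_cnt_lt h2] at this
      exact hxy (Option.some_injective _ this).symm
  have hc : w.count x = 0 := by rw [← cnt_length]; exact hzero w.length
  rw [count_eq_zero] at hc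
  exact hc hx

/-! ### bridging `Alternates` and `Leads` -/

lemma mem_two {w : List V} {x y z : V}
    (hz : z ∈ w.filter (fun z => decide (z = x ∨ z = y))) : z = x ∨ z = y := by
  have := of_mem_filter hz
  simpa using this

lemma cnt_eq_count_filter (w : List V) (x y : V) (n : ℕ) :
    cnt w x n = count x ((w.take n).filter (fun z => decide (z = x ∨ z = y))) := by
  rw [cnt, count_filter (by simp)]

lemma cnt_eq_count_filter' (w : List V) (x y : V) (n : ℕ) :
    cnt w y n = count y ((w.take n).filter (fun z => decide (z = x ∨ z = y))) := by
  rw [cnt, count_filter (by simp)]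

lemma leads_total {w : List V} {x y : V} (hxy : x ≠ y) (h : Alternates w x y) :
    Leads w x y ∨ Leads w y x := by
  set q : V → Bool := fun z => decide (z = x ∨ z = y) with hq
  set m : List V := w.filter q with hmdef
  have hmem : ∀ z ∈ m, z = x ∨ z = y := fun z hz => mem_two hz
  rcases nf hxy m hmem h with hm | hm
  · left
    intro n
    have hpre : (w.take n).filter q <+: m := (take_prefix n w).filter q
    rw [hm] at hpre
    have := prefix_count_altL hxy m.length _ hpre
    rw [cnt_eq_count_filter w x y n, cnt_eq_count_filter' w x y n]
    exact this
  · right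
    intro n
    have hpre : (w.take n).filter q <+: m := (take_prefix n w).filter q
    rw [hm] at hpre
    have := prefix_count_altL hxy.symm m.length _ hpre
    rw [cnt_eq_count_filter w x y n, cnt_eq_count_filter' w x y n]
    exact this

lemma alternates_of_leads {w : List V} {x y : V} (hxy : x ≠ y) (h : Leads w x y) :
    Alternates w x y := by
  apply chain'_of_prefix_count hxy _ (fun z hz => mem_two hz)
  intro p hp
  obtain ⟨n, rfl⟩ := exists_take_of_prefix_filter _ w p hp
  have := h n
  rw [cnt_eq_count_filter w x y n, cnt_eq_count_filter' w x y n] at this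
  exact this

lemma alternates_symm {w : List V} {x y : V} (h : Alternates w x y) : Alternates w y x := by
  unfold Alternates at h ⊢
  have e : w.filter (fun z => decide (z = y ∨ z = x)) =
      w.filter (fun z => decide (z = x ∨ z = y)) :=
    filter_congr (fun z _ => by rw [decide_eq_decide]; exact or_comm)
  rw [e]
  exact h

lemma not_leads_both {w : List V} {x y : V} (hxy : x ≠ y) (hx : x ∈ w)
    (h1 : Leads w x y) (h2 : Leads w y x) : False := by
  exact false_of_cnt_eq hxy hx (fun n => le_antisymm ((h2 n).1) ((h1 n).1))

/-! ### initial permutation -/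

/-- the word listing the letters of `l` in order of first occurrence -/
def ip : List V → List V
  | [] => []
  | a :: l => a :: (ip l).filter (fun z => decide (z ≠ a))

lemma mem_ip {l : List V} {x : V} : x ∈ ip l ↔ x ∈ l := by
  induction l with
  | nil => simp [ip]
  | cons a l ih =>
    rw [ip, mem_cons, mem_cons]
    constructor
    · rintro (rfl | h)
      · left; rfl
      · right; rw [← ih]; exact mem_of_mem_filter h
    · rintro (rfl | h)
      · left; rfl
      · by_cases hxa : x = a
        · left; exact hxa
        · right
          rw [mem_filter]
          exact ⟨ih.2 h, by simpa using hxa⟩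

lemma nodup_ip (l : List V) : (ip l).Nodup := by
  induction l with
  | nil => simp [ip]
  | cons a l ih =>
    rw [ip, nodup_cons]
    constructor
    · intro h
      have := of_mem_filter h
      simp at this
    · exact ih.filter _

lemma find?_filter_imp {q r : V → Bool} (h : ∀ z, q z = true → r z = true) :
    ∀ (m : List V), (m.filter r).find? q = m.find? q := by
  intro m
  induction m with
  | nil => rfl
  | cons b m ih =>
    by_cases hrb : r b
    · rw [filter_cons_of_pos hrb]
      by_cases hqb : q b
      · rw [find?_cons_of_pos hqb, find?_cons_of_pos hqb]
      · rw [find?_cons_of_neg hqb, find?_cons_of_neg hqb]; exact ih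
    · rw [filter_cons_of_neg hrb, find?_cons_of_neg, ih]
      intro hqb
      exact hrb (h b hqb)

lemma find?_ip (q : V → Bool) : ∀ (l : List V), (ip l).find? q = l.find? q := by
  intro l
  induction l with
  | nil => rfl
  | cons a l ih =>
    rw [ip]
    by_cases hqa : q a
    · rw [find?_cons_of_pos hqa, find?_cons_of_pos hqa]
    · rw [find?_cons_of_neg hqa, find?_cons_of_neg hqa, ← ih]
      apply find?_filter_imp
      intro z hz
      simp only [decide_eq_true_eq]
      intro hza
      rw [hza] at hz
      exact hqa hz

lemma prefix_filter_pair {w : List V} {x y : V} (hxy : x ≠ y) (hx : x ∈ w) (hy : y ∈ w)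
    (hh : (w.filter (fun z => decide (z = x ∨ z = y))).head? = some x) :
    (ip w).filter (fun z => decide (z = x ∨ z = y)) = [x, y] := by
  set q : V → Bool := fun z => decide (z = x ∨ z = y) with hq
  set L : List V := (ip w).filter q with hL
  have hcx : count x L = 1 := by
    rw [hL, count_filter (by simp [hq])]
    exact count_eq_one_of_mem (nodup_ip w) (mem_ip.2 hx)
  have hcy : count y L = 1 := by
    rw [hL, count_filter (by simp [hq])]
    exact count_eq_one_of_mem (nodup_ip w) (mem_ip.2 hy)
  have hlen : L.length = 2 := by
    rw [length_eq_counts hxy L (fun z hz => mem_two hz), hcx, hcy]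
  have hhead : L.head? = some x := by
    rw [hL, head?_filter, find?_ip, ← head?_filter, hh]
  obtain ⟨a, b, hab⟩ : ∃ a b, L = [a, b] := by
    match L, hlen with
    | [a, b], _ => exact ⟨a, b, rfl⟩
  rw [hab] at hhead hcx hcy ⊢
  have ha : a = x := by simpa using hhead
  subst ha
  have hb : b = y := by
    rcases mem_two (show b ∈ L by rw [hab]; simp) with h | h
    · exfalso
      rw [h, count_cons_self, count_singleton'] at hcx
      simp at hcx
    · exact h
  rw [hb]

/-! ### prepending the initial permutation preserves representation -/

lemma alt_prepend_of_alt {w : List V} {x y : V} (hxy : x ≠ y) (hx : x ∈ w) (hy : y ∈ w)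
    (halt : Alternates w x y) : Alternates (ip w ++ w) x y := by
  set q : V → Bool := fun z => decide (z = x ∨ z = y) with hq
  set m : List V := w.filter q with hm
  have hfil : (ip w ++ w).filter q = (ip w).filter q ++ m := by rw [filter_append]
  have hmx : x ∈ m := by
    rw [hm, mem_filter]
    exact ⟨hx, by simp [hq]⟩
  rcases nf hxy m (fun z hz => mem_two hz) halt with hnf | hnf
  · -- m = altL x y len, starts with x
    have hlen : m.length ≠ 0 := by
      intro h0
      rw [length_eq_zero_iff] at h0
      rw [h0] at hmx
      cases hmx
    have hhead : m.head? = some x := by rw [hnf]; exact altL_head hlen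
    have hpre : (ip w).filter q = [x, y] := prefix_filter_pair hxy hx hy hhead
    unfold Alternates
    rw [hfil, hpre, hnf]
    have : [x, y] ++ altL x y m.length = altL x y (m.length + 2) := by
      rw [altL, altL]; rfl
    rw [this]
    exact altL_chain' hxy _
  · -- m = altL y x len, starts with y
    have hlen : m.length ≠ 0 := by
      intro h0
      rw [length_eq_zero_iff] at h0
      rw [h0] at hmx
      cases hmx
    have hhead : m.head? = some y := by rw [hnf]; exact altL_head hlen
    have hq' : w.filter (fun z => decide (z = y ∨ z = x)) = m := by
      rw [hm]
      exact filter_congr (fun z _ => by rw [decide_eq_decide]; exact or_comm)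
    have hpre : (ip w).filter (fun z => decide (z = y ∨ z = x)) = [y, x] := by
      apply prefix_filter_pair hxy.symm hy hx
      rw [hq']; exact hhead
    have hpre' : (ip w).filter q = [y, x] := by
      rw [← hpre]
      exact filter_congr (fun z _ => by rw [decide_eq_decide]; exact or_comm)
    unfold Alternates
    rw [hfil, hpre', hnf]
    have : [y, x] ++ altL y x m.length = altL y x (m.length + 2) := by
      rw [altL, altL]; rfl
    rw [this]
    exact altL_chain' hxy.symm _

lemma reps_prepend {G : SimpleGraph V} {w : List V} (hmem : ∀ t : V, t ∈ w)
    (hrep : ∀ x y : V, x ≠ y → (Alternates w x y ↔ G.Adj x y)) :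
    (∀ t : V, t ∈ ip w ++ w) ∧
    (∀ x y : V, x ≠ y → (Alternates (ip w ++ w) x y ↔ G.Adj x y)) ∧
    (∀ t : V, 2 ≤ (ip w ++ w).count t) := by
  refine ⟨fun t => mem_append_right _ (hmem t), fun x y hxy => ?_, fun t => ?_⟩
  · constructor
    · intro halt
      by_contra hadj
      have hnot : ¬ Alternates w x y := fun h => hadj ((hrep x y hxy).1 h)
      apply hnot
      unfold Alternates at halt ⊢
      rw [filter_append] at halt
      exact halt.suffix (suffix_append _ _)
    · intro hadj
      exact alt_prepend_of_alt hxy (hmem x) (hmem y) ((hrep x y hxy).2 hadj)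
  · rw [count_append]
    have h1 : 1 ≤ (ip w).count t := count_pos_iff.2 (mem_ip.2 (hmem t))
    have h2 : 1 ≤ w.count t := count_pos_iff.2 (hmem t)
    omega

/-! ### the position of the "section 1" occurrence -/

open Classical in
noncomputable def sg (w : List V) (v t : V) : ℕ := if Leads w t v then 2 else 1

lemma sg_pos (w : List V) (v t : V) : 1 ≤ sg w v t := by
  unfold sg; split <;> omega

lemma sg_le (w : List V) (v t : V) : sg w v t ≤ 2 := by
  unfold sg; split <;> omega

lemma sg_L {w : List V} {v t : V} (h : Leads w t v) : sg w v t = 2 := by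
  unfold sg; rw [if_pos h]

lemma sg_R {w : List V} {v t : V} (h : ¬ Leads w t v) : sg w v t = 1 := by
  unfold sg; rw [if_neg h]

open Classical in
noncomputable def posn (w : List V) (v t : V) : ℕ :=
  if h : ∃ n, sg w v t ≤ cnt w t n then Nat.find h else 0

section posn
variable {w : List V} {v t : V}

lemma posn_ex (hct : 2 ≤ w.count t) : ∃ n, sg w v t ≤ cnt w t n :=
  ⟨w.length, by rw [cnt_length]; have := sg_le w v t; omega⟩

lemma posn_spec (hct : 2 ≤ w.count t) : sg w v t ≤ cnt w t (posn w v t) := by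
  unfold posn
  rw [dif_pos (posn_ex hct)]
  exact Nat.find_spec (posn_ex (v := v) hct)

lemma posn_min (hct : 2 ≤ w.count t) {m : ℕ} (hm : m < posn w v t) :
    cnt w t m < sg w v t := by
  unfold posn at hm
  rw [dif_pos (posn_ex hct)] at hm
  have := Nat.find_min (posn_ex (v := v) hct) hm
  omega

lemma posn_le (hct : 2 ≤ w.count t) {n : ℕ} (h : sg w v t ≤ cnt w t n) :
    posn w v t ≤ n := by
  unfold posn
  rw [dif_pos (posn_ex hct)]
  exact Nat.find_le h

lemma posn_pos (hct : 2 ≤ w.count t) : 1 ≤ posn w v t := by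
  by_contra h
  have h0 : posn w v t = 0 := by omega
  have := posn_spec (v := v) hct
  rw [h0, cnt_zero] at this
  have := sg_pos w v t
  omega

lemma posn_get (hct : 2 ≤ w.count t) : w[posn w v t - 1]? = some t := by
  have h1 := posn_pos (v := v) hct
  apply getElem?_of_cnt_lt
  have h2 : posn w v t - 1 + 1 = posn w v t := by omega
  rw [h2]
  have h3 : cnt w t (posn w v t - 1) < sg w v t := posn_min hct (by omega)
  have h4 := posn_spec (v := v) hct
  omega

end posn

lemma posn_inj {w : List V} {v s t : V} (hcs : 2 ≤ w.count s) (hct : 2 ≤ w.count t)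
    (hst : s ≠ t) : posn w v s ≠ posn w v t := by
  intro h
  have h1 := posn_get (v := v) hcs
  have h2 := posn_get (v := v) hct
  rw [h] at h1
  rw [h1] at h2
  exact hst (Option.some_injective _ h2)

/-! ### classification of lead directions -/

section classify
variable {w : List V} {v x y : V}

/-- same shape: the one with earlier section-1 occurrence leads. -/
lemma classify_same (hcx : 2 ≤ w.count x) (hcy : 2 ≤ w.count y) (hxy : x ≠ y)
    (hsg : sg w v y ≤ sg w v x) (halt : Alternates w x y)
    (hp : posn w v x < posn w v y) : Leads w x y := by
  rcases leads_total hxy halt with h | h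
  · exact h
  · exfalso
    have hle : posn w v y ≤ posn w v x := by
      apply posn_le hcy
      have h1 := (h (posn w v x)).1
      have h2 := posn_spec (v := v) hcx
      have h3 := hsg
      omega
    omega

/-- shapes (L,R) with `posn x < posn y` is impossible. -/
lemma classify_LR (hcx : 2 ≤ w.count x) (hcy : 2 ≤ w.count y) (hxy : x ≠ y)
    (hyv : y ≠ v)
    (hxL : Leads w x v) (hyR : Leads w v y) (halt : Alternates w x y)
    (hp : posn w v x < posn w v y) : False := by
  have hxw : x ∈ w := count_pos_iff.1 (by omega)
  have hyw : y ∈ w := count_pos_iff.1 (by omega)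
  have hsgy : sg w v y = 1 := sg_R (fun hh => not_leads_both hyv hyw hh hyR)
  rcases leads_total hxy halt with h | h
  · have hle : posn w v y ≤ posn w v x := by
      apply posn_le hcy
      have h1 := (h (posn w v x)).2
      have h2 := posn_spec (v := v) hcx
      have h3 := sg_L hxL
      omega
    omega
  · -- Leads w y x together with shapes forces all counts equal
    apply false_of_cnt_eq hxy hxw
    intro n
    have h1 := (h n).1
    have h2 := (hyR n).1
    have h3 := (hxL n).1
    omega

/-- shapes (R,L): the second letter leads, regardless of positions. -/
lemma classify_RL (hxy : x ≠ y) (hxw : x ∈ w)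
    (hxR : Leads w v x) (hyL : Leads w y v) (halt : Alternates w x y) :
    Leads w y x := by
  rcases leads_total hxy halt with h | h
  · exfalso
    apply false_of_cnt_eq hxy hxw
    intro n
    have h1 := (h n).1
    have h2 := (hxR n).1
    have h3 := (hyL n).1
    omega
  · exact h

end classify

/-! ### the key lemma -/

lemma key {w : List V} {v x y z : V} (hc : ∀ t : V, 2 ≤ w.count t)
    (hxv : x ≠ v) (hyv : y ≠ v) (hzv : z ≠ v)
    (hxy : x ≠ y) (hyz : y ≠ z) (hxz : x ≠ z)
    (haxv : Alternates w x v) (hayv : Alternates w y v) (hazv : Alternates w z v)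
    (haxy : Alternates w x y) (hayz : Alternates w y z)
    (hpxy : posn w v x < posn w v y) (hpyz : posn w v y < posn w v z) :
    Alternates w x z := by
  have hxw : x ∈ w := count_pos_iff.1 (by have := hc x; omega)
  have hyw : y ∈ w := count_pos_iff.1 (by have := hc y; omega)
  have hzw : z ∈ w := count_pos_iff.1 (by have := hc z; omega)
  have hvw : v ∈ w := count_pos_iff.1 (by have := hc v; omega)
  have sx := leads_total hxv haxv
  have sy := leads_total hyv hayv
  have sz := leads_total hzv hazv
  rcases sx with hxL | hxR
  · -- x has shape L; then y and z must have shape L as well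
    rcases sy with hyL | hyR
    · rcases sz with hzL | hzR
      · -- LLL
        have hl1 : Leads w x y :=
          classify_same (hc x) (hc y) hxy (by rw [sg_L hxL, sg_L hyL]) haxy hpxy
        have hl2 : Leads w y z :=
          classify_same (hc y) (hc z) hyz (by rw [sg_L hyL, sg_L hzL]) hayz hpyz
        apply alternates_of_leads hxz
        intro n
        have h1 := hl1 n
        have h2 := hl2 n
        have h3 := hxL n
        have h4 := hzL n
        omega
      · exact absurd (classify_LR (hc y) (hc z) hyz hzv hyL hzR hayz hpyz) (fun h => h)
    · exact absurd (classify_LR (hc x) (hc y) hxy hyv hxL hyR haxy hpxy) (fun h => h)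
  · rcases sy with hyL | hyR
    · -- x R, y L, hence z L
      rcases sz with hzL | hzR
      · have hl1 : Leads w y x := classify_RL hxy hxw hxR hyL haxy
        have hl2 : Leads w y z :=
          classify_same (hc y) (hc z) hyz (by rw [sg_L hyL, sg_L hzL]) hayz hpyz
        apply alternates_symm
        apply alternates_of_leads hxz.symm
        intro n
        have h1 := hl1 n
        have h2 := hl2 n
        have h3 := hxR n
        have h4 := hzL n
        omega
      · exact absurd (classify_LR (hc y) (hc z) hyz hzv hyL hzR hayz hpyz) (fun h => h)
    · -- x R, y R
      have hnyL : ¬ Leads w y v := fun h => not_leads_both hyv hyw h hyR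
      have hnxL : ¬ Leads w x v := fun h => not_leads_both hxv hxw h hxR
      have hl1 : Leads w x y :=
        classify_same (hc x) (hc y) hxy (by rw [sg_R hnxL, sg_R hnyL]) haxy hpxy
      rcases sz with hzL | hzR
      · -- RRL
        have hl2 : Leads w z y := classify_RL hyz hyw hyR hzL hayz
        apply alternates_symm
        apply alternates_of_leads hxz.symm
        intro n
        have h1 := hl1 n
        have h2 := hl2 n
        have h3 := hxR n
        have h4 := hzL n
        omega
      · -- RRR
        have hnzL : ¬ Leads w z v := fun h => not_leads_both hzv hzw h hzR
        have hl2 : Leads w y z :=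
          classify_same (hc y) (hc z) hyz (by rw [sg_R hnyL, sg_R hnzL]) hayz hpyz
        apply alternates_of_leads hxz
        intro n
        have h1 := hl1 n
        have h2 := hl2 n
        have h3 := hxR n
        have h4 := hzR n
        omega

end NWR

/-! ### the finite check: every linear order on the 7 neighbours of 0 has a bad triple -/

namespace NWR
open List

def eb : List (Fin 8 × Fin 8) :=
  [(0,1),(0,2),(0,3),(1,2),(1,3),(2,3),
   (0,4),(0,5),(0,6),(0,7),(1,4),(1,6),(1,7),(2,6),(3,7),
   (4,5),(4,6),(4,7),(5,6),(5,7),(6,7)]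

def adjN (a b : Fin 8) : Bool := decide ((a,b) ∈ eb) || decide ((b,a) ∈ eb)

def stepB (acc : List (Fin 8)) (c : Fin 8) : Bool :=
  (acc.sublistsLen 2).any fun p =>
    match p with
    | [a, b] => adjN a b && adjN b c && !(adjN a c)
    | _ => false

def search : ℕ → List (Fin 8) → List (Fin 8) → Bool
  | 0, _, _ => false
  | fuel+1, acc, rem =>
    match rem with
    | [] => false
    | _ :: _ => rem.all fun c => stepB acc c || search fuel (acc ++ [c]) (rem.erase c)

lemma search_correct : ∀ (fuel : ℕ) (acc rem l : List (Fin 8)),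
    search fuel acc rem = true → l.Perm rem →
    ∃ a b c : Fin 8, [a, b, c] <+ acc ++ l ∧
      adjN a b = true ∧ adjN b c = true ∧ adjN a c = false := by
  intro fuel
  induction fuel with
  | zero => intro acc rem l h; simp [search] at h
  | succ fuel ih =>
    intro acc rem l h hperm
    cases rem with
    | nil => simp [search] at h
    | cons r rs =>
      cases l with
      | nil =>
        exfalso
        simpa using hperm.length_eq
      | cons c l' =>
        have hc : c ∈ r :: rs := hperm.subset mem_cons_self
        rw [search] at h
        have hcc := (List.all_eq_true.1 h) c hc
        rw [Bool.or_eq_true] at hcc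
        rcases hcc with hstep | hrec
        · obtain ⟨p, hp, hbad⟩ := List.any_eq_true.1 hstep
          obtain ⟨hsub, hlen⟩ := mem_sublistsLen.1 hp
          obtain ⟨a, b, rfl⟩ : ∃ a b, p = [a, b] := by
            match p, hlen with
            | [a, b], _ => exact ⟨a, b, rfl⟩
          simp only [Bool.and_eq_true, Bool.not_eq_true'] at hbad
          refine ⟨a, b, c, ?_, hbad.1.1, hbad.1.2, hbad.2⟩
          have h1 : [a, b] ++ [c] <+ acc ++ c :: l' :=
            Sublist.append hsub (by simp)
          simpa using h1
        · have hperm' : l'.Perm ((r :: rs).erase c) := by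
            have h1 : (r :: rs).Perm (c :: (r :: rs).erase c) := perm_cons_erase hc
            exact (hperm.trans h1).cons_inv
          obtain ⟨a, b, d, hsub, h1, h2, h3⟩ := ih (acc ++ [c]) _ l' hrec hperm'
          refine ⟨a, b, d, ?_, h1, h2, h3⟩
          rwa [append_assoc, singleton_append] at hsub

set_option maxRecDepth 100000 in
lemma finfact : search 8 [] [1,2,3,4,5,6,7] = true := by decide

end NWR


/-- The graph `B₅` is not word-representable. -/
theorem stmt13 : ¬ WordRepresentable B5 := by
  rintro ⟨w0, hmem0, hrep0⟩
  obtain ⟨hmem, hrep, hc⟩ := NWR.reps_prepend hmem0 hrep0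
  set w : List (Fin 8) := NWR.ip w0 ++ w0 with hw
  letI : DecidableRel B5.Adj := fun a b =>
    decidable_of_iff _ (SimpleGraph.fromRel_adj _ a b).symm
  have hadj_iff : ∀ a b : Fin 8, NWR.adjN a b = true ↔ B5.Adj a b := by decide
  have hnz : ∀ u : Fin 8, u ∈ ([1,2,3,4,5,6,7] : List (Fin 8)) → u ≠ 0 := by decide
  have hadj0 : ∀ u : Fin 8, u ≠ 0 → B5.Adj u 0 := by decide
  classical
  set pos : Fin 8 → ℕ := fun t => NWR.posn w 0 t with hposdef
  set lle : Fin 8 → Fin 8 → Bool := fun a b => decide (pos a ≤ pos b) with hlle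
  set l : List (Fin 8) := ([1,2,3,4,5,6,7] : List (Fin 8)).mergeSort lle with hl
  have hperm : l.Perm [1,2,3,4,5,6,7] := List.mergeSort_perm _ lle
  have hsorted : l.Pairwise (fun a b => lle a b = true) := by
    apply List.pairwise_mergeSort
    · intro a b c h1 h2
      rw [hlle] at h1 h2 ⊢
      simp only [decide_eq_true_eq] at h1 h2 ⊢
      omega
    · intro a b
      rw [hlle]
      simp only [Bool.or_eq_true, decide_eq_true_eq]
      omega
  obtain ⟨a, b, c, hsub, hab, hbc, hac⟩ :=
    NWR.search_correct 8 [] [1,2,3,4,5,6,7] l NWR.finfact hperm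
  rw [List.nil_append] at hsub
  have hnd : l.Nodup := hperm.nodup_iff.2 (by decide)
  have htnd : ([a, b, c] : List (Fin 8)).Nodup := hnd.sublist hsub
  have hne_ab : a ≠ b := by simp at htnd; tauto
  have hne_bc : b ≠ c := by simp at htnd; tauto
  have hne_ac : a ≠ c := by simp at htnd; tauto
  have hmema : a ∈ l := hsub.subset (by simp)
  have hmemb : b ∈ l := hsub.subset (by simp)
  have hmemc : c ∈ l := hsub.subset (by simp)
  have ha0 : a ≠ 0 := hnz a (hperm.subset hmema)
  have hb0 : b ≠ 0 := hnz b (hperm.subset hmemb)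
  have hc0 : c ≠ 0 := hnz c (hperm.subset hmemc)
  have hpair : ([a, b, c] : List (Fin 8)).Pairwise (fun a b => lle a b = true) :=
    hsorted.sublist hsub
  have hple_ab : pos a ≤ pos b := by
    have := (List.pairwise_cons.1 hpair).1 b (by simp)
    rw [hlle] at this
    simpa using this
  have hple_bc : pos b ≤ pos c := by
    have := (List.pairwise_cons.1 (List.pairwise_cons.1 hpair).2).1 c (by simp)
    rw [hlle] at this
    simpa using this
  have hplt_ab : NWR.posn w 0 a < NWR.posn w 0 b :=
    lt_of_le_of_ne hple_ab (NWR.posn_inj (hc a) (hc b) hne_ab)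
  have hplt_bc : NWR.posn w 0 b < NWR.posn w 0 c :=
    lt_of_le_of_ne hple_bc (NWR.posn_inj (hc b) (hc c) hne_bc)
  have hAab : B5.Adj a b := (hadj_iff a b).1 hab
  have hAbc : B5.Adj b c := (hadj_iff b c).1 hbc
  have haab : Alternates w a b := (hrep a b hne_ab).2 hAab
  have habc : Alternates w b c := (hrep b c hne_bc).2 hAbc
  have haav : Alternates w a 0 := (hrep a 0 ha0).2 (hadj0 a ha0)
  have habv : Alternates w b 0 := (hrep b 0 hb0).2 (hadj0 b hb0)
  have hacv : Alternates w c 0 := (hrep c 0 hc0).2 (hadj0 c hc0)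
  have hAac : B5.Adj a c :=
    (hrep a c hne_ac).1
      (NWR.key hc ha0 hb0 hc0 hne_ab hne_bc hne_ac haav habv hacv haab habc hplt_ab hplt_bc)
  rw [← hadj_iff a c] at hAac
  rw [hac] at hAac
  cases hAac
end

section
/- The graph A_2 is word-representable; in fact, it admits a semi-transitive orientation. -/
/-- `D` is an orientation of `G`: every directed edge lies on an edge of `G`, and every
edge of `G` receives exactly one direction. -/
def IsOrientation {V : Type*} (G : SimpleGraph V) (D : V → V → Prop) : Prop :=
  (∀ x y, D x y → G.Adj x y) ∧
  (∀ x y, G.Adj x y → (D x y ∨ D y x)) ∧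
  (∀ x y, ¬ (D x y ∧ D y x))

/-- `D` is a semi-transitive orientation of `G`: it is an acyclic orientation and, for
every directed path `p 0 → p 1 → ⋯ → p k` with `k ≥ 2`, either `p 0` and `p k` are not
adjacent in `G`, or `D (p i) (p j)` holds for all `i < j ≤ k`. -/
def IsSemiTransitiveOrientation {V : Type*} (G : SimpleGraph V) (D : V → V → Prop) : Prop :=
  IsOrientation G D ∧
  (∀ v, ¬ Relation.TransGen D v v) ∧
  (∀ (k : ℕ) (p : ℕ → V), 2 ≤ k → (∀ i < k, D (p i) (p (i + 1))) →
    ¬ G.Adj (p 0) (p k) ∨ ∀ i j, i < j → j ≤ k → D (p i) (p j))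

/-- The graph `A₂` on the vertex set `{1,2,3,5,6,7,8,9,10}` of the paper, represented by
`Fin 9` via the order-preserving bijection `1↦0, 2↦1, 3↦2, 5↦3, 6↦4, 7↦5, 8↦6, 9↦7, 10↦8`:
cliques on `{1,2,3}` and on `{5,6,7,8,9,10}` together with the edges
`{1,5},{2,6},{3,7},{1,8},{2,8},{1,9},{3,9},{2,10},{3,10}`. -/
def A2 : SimpleGraph (Fin 9) :=
  SimpleGraph.fromRel (fun a b => (a, b) ∈
    ([(0,1),(0,2),(1,2),
      (3,4),(3,5),(3,6),(3,7),(3,8),(4,5),(4,6),(4,7),(4,8),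
      (5,6),(5,7),(5,8),(6,7),(6,8),(7,8),
      (0,3),(1,4),(2,5),(0,6),(1,6),(0,7),(2,7),(1,8),(2,8)] : List (Fin 9 × Fin 9)))

/-- Boolean test for a list having no two equal consecutive entries. -/
def altb {V : Type*} [DecidableEq V] : List V → Bool
  | [] => true
  | [_] => true
  | a :: b :: t => a ≠ b && altb (b :: t)

lemma altb_iff {V : Type*} [DecidableEq V] :
    ∀ l : List V, l.Chain' (· ≠ ·) ↔ altb l = true
  | [] => by simp [altb, List.Chain']
  | [_] => by simp [altb, List.Chain']
  | a :: b :: t => by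
    rw [List.Chain', List.isChain_cons_cons, altb, Bool.and_eq_true, decide_eq_true_iff, ← altb_iff (b :: t)]
    exact Iff.rfl

instance {V : Type*} [DecidableEq V] (w : List V) (x y : V) : Decidable (Alternates w x y) :=
  decidable_of_iff _ (altb_iff (w.filter (fun z => decide (z = x ∨ z = y)))).symm

/-- The representing word. -/
def myWord : List (Fin 9) :=
  [0, 1, 5, 7, 2, 3, 6, 0, 4, 8, 1, 5, 7, 2, 3, 6, 4, 8, 5, 0, 7, 3, 1, 6, 4, 2, 8]

/-- Position function giving the acyclic order 0,1,5,7,2,3,6,4,8. -/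
def myPos : Fin 9 → Fin 9 := ![0, 1, 4, 5, 7, 2, 6, 3, 8]

instance : DecidableRel A2.Adj := fun a b =>
  decidable_of_iff _ (SimpleGraph.fromRel_adj _ a b).symm

/-- The orientation. -/
def myD (x y : Fin 9) : Prop := A2.Adj x y ∧ myPos x < myPos y

instance : DecidableRel myD := fun x y => by unfold myD; infer_instance

/-- Transitive closure of `myD`, as an explicit list of pairs. -/
def myT (x y : Fin 9) : Prop := (x, y) ∈
  ([(0,1),(0,2),(0,3),(0,4),(0,6),(0,7),(0,8),(1,2),(1,4),(1,6),(1,8),(2,8),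
    (3,4),(3,6),(3,8),(4,8),(5,2),(5,3),(5,4),(5,6),(5,7),(5,8),(6,4),(6,8),
    (7,2),(7,3),(7,4),(7,6),(7,8)] : List (Fin 9 × Fin 9))

instance : DecidableRel myT := fun x y => by unfold myT; infer_instance

lemma myDT : ∀ x y, myD x y → myT x y := by decide
lemma myTD : ∀ x y z, myT x y → myD y z → myT x z := by decide
lemma myTirr : ∀ x, ¬ myT x x := by decide
lemma myS : ∀ u v a b : Fin 9, myD u v →
    (myT u a ∨ u = a) → (myT a v ∨ a = v) → (myT u b ∨ u = b) → (myT b v ∨ b = v) →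
    myT a b → myD a b := by decide

lemma myTG : ∀ x y, Relation.TransGen myD x y → myT x y := by
  intro x y h
  induction h with
  | single h => exact myDT _ _ h
  | tail _ h ih => exact myTD _ _ _ ih h

/-- The graph `A₂` is word-representable; in fact, it admits a semi-transitive
orientation. -/
theorem stmt19 :
    WordRepresentable A2 ∧ ∃ D : Fin 9 → Fin 9 → Prop, IsSemiTransitiveOrientation A2 D := by
  constructor
  · exact ⟨myWord, by decide, by decide⟩
  · refine ⟨myD, ⟨fun x y h => h.1, by decide, by decide⟩, ?_, ?_⟩
    · intro v h
      exact myTirr v (myTG _ _ h)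
    · intro k p hk hpath
      by_cases hadj : A2.Adj (p 0) (p k)
      · right
        have hchain : ∀ j i, i < j → j ≤ k → Relation.TransGen myD (p i) (p j) := by
          intro j
          induction j with
          | zero => intro i hij _; omega
          | succ j ih =>
            intro i hij hjk
            rcases Nat.lt_succ_iff_lt_or_eq.mp hij with h | h
            · exact (ih i h (by omega)).tail (hpath j (by omega))
            · subst h; exact Relation.TransGen.single (hpath i (by omega))
        have hD0k : myD (p 0) (p k) := by
          rcases (by decide : ∀ x y, A2.Adj x y → (myD x y ∨ myD y x)) _ _ hadj with h | h
          · exact h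
          · exact absurd (myTG _ _ ((hchain k 0 (by omega) le_rfl).tail h))
              (myTirr (p 0))
        intro i j hij hjk
        refine myS (p 0) (p k) (p i) (p j) hD0k ?_ ?_ ?_ ?_
          (myTG _ _ (hchain j i hij hjk))
        · rcases Nat.eq_zero_or_pos i with h | h
          · right; rw [h]
          · left; exact myTG _ _ (hchain i 0 h (by omega))
        · left; exact myTG _ _ (hchain k i (by omega) le_rfl)
        · left; exact myTG _ _ (hchain j 0 (by omega) hjk)
        · rcases Nat.lt_or_ge j k with h | h
          · left; exact myTG _ _ (hchain k j h le_rfl)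
          · right; congr 1; omega
      · exact Or.inl hadj
end
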